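/- Let Y and Z be closed subvarieties of projective n-space defined by homogeneous ideals I_Y and I_Z in k[x_0,...,x_n], with Y contained in the linear subspace {x_0 = ... = x_{l-1} = 0} and Z contained in {x_{l+1} = ... = x_n = 0}, and let I_X = I_Y ∩ I_Z. Then for any monomial order ≺, the initial ideal of I_X satisfies in_≺(I_X) = ⟨in_≺(I_Y ∩ k[x_l,...,x_n])⟩ + ⟨in_≺(I_Z ∩ k[x_0,...,x_l])⟩ + T, where T = ⟨x_0,...,x_{l-1}⟩·⟨x_{l+1},...,x_n⟩. -/

import Mathlib

open MvPolynomial Finset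
open scoped MonomialOrder Pointwise

/-- The leading exponent (exponent of the leading monomial) of a polynomial
with respect to a monomial order. -/
noncomputable def leadExp {k : Type*} [Field k] {N : ℕ}
    (mo : MonomialOrder (Fin N)) (f : MvPolynomial (Fin N) k) :
    Fin N →₀ ℕ :=
  mo.toSyn.symm (f.support.sup mo.toSyn)

/-- The ideal of `k[x_0,…,x_{N-1}]` generated by the leading monomials of the elements of
`I ∩ k[x_i : i ∈ s]`, i.e. of the nonzero elements of `I` all of whose variables lie in `s`.
This is the ideal generated by the initial ideal (computed in the smaller polynomial ring
`k[x_i : i ∈ s]` with the restricted monomial order) of the intersection of `I` with that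
smaller polynomial ring. -/
noncomputable def restInitialIdeal {k : Type*} [Field k] {N : ℕ} (mo : MonomialOrder (Fin N))
    (I : Ideal (MvPolynomial (Fin N) k)) (s : Set (Fin N)) :
    Ideal (MvPolynomial (Fin N) k) :=
  Ideal.span { g | ∃ f ∈ I, f ≠ 0 ∧ ↑f.vars ⊆ s ∧ g = monomial (leadExp mo f) (1 : k) }

/-- The initial ideal of `I` with respect to a monomial order: the ideal generated by the
leading monomials of the nonzero elements of `I`. -/
noncomputable def initialIdeal {k : Type*} [Field k] {N : ℕ} (mo : MonomialOrder (Fin N))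
    (I : Ideal (MvPolynomial (Fin N) k)) : Ideal (MvPolynomial (Fin N) k) :=
  restInitialIdeal mo I Set.univ

/-- The coordinate point whose coordinates all vanish except the `c`-th, which equals `1`. -/
def coordPt (k : Type*) [Field k] {N : ℕ} (c : ℕ) : Fin N → k :=
  fun j => if (j : ℕ) = c then 1 else 0

section Aux

variable {k : Type*} [Field k] {N : ℕ}

lemma Aux.degree_single (a : Fin N) (b : ℕ) : (Finsupp.single a b).degree = b := by
  rcases eq_or_ne b 0 with rfl | h
  · simp [Finsupp.degree]
  · rw [Finsupp.degree_apply, Finsupp.support_single_ne_zero _ h, Finset.sum_singleton,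
      Finsupp.single_eq_same]

lemma leadExp_mem_support (mo : MonomialOrder (Fin N)) {f : MvPolynomial (Fin N) k}
    (hf : f ≠ 0) : leadExp mo f ∈ f.support := by
  obtain ⟨b, hb, he⟩ := Finset.exists_mem_eq_sup f.support
    (by simpa using hf) mo.toSyn
  have : leadExp mo f = b := by
    rw [leadExp, he, AddEquiv.symm_apply_apply]
  rwa [this]

lemma toSyn_leadExp (mo : MonomialOrder (Fin N)) (f : MvPolynomial (Fin N) k) :
    mo.toSyn (leadExp mo f) = f.support.sup mo.toSyn := by
  rw [leadExp, AddEquiv.apply_symm_apply]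

lemma leadExp_eq_of (mo : MonomialOrder (Fin N)) {f g : MvPolynomial (Fin N) k}
    (hsub : g.support ⊆ f.support) (hmem : leadExp mo f ∈ g.support) :
    leadExp mo g = leadExp mo f := by
  have h1 : g.support.sup mo.toSyn ≤ f.support.sup mo.toSyn := Finset.sup_mono hsub
  have h2 : f.support.sup mo.toSyn ≤ g.support.sup mo.toSyn := by
    rw [← toSyn_leadExp mo f]
    exact Finset.le_sup hmem
  rw [leadExp, leadExp, le_antisymm h1 h2]

lemma leadExp_monomial (mo : MonomialOrder (Fin N)) (e : Fin N →₀ ℕ) {c : k} (hc : c ≠ 0) :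
    leadExp mo (monomial e c) = e := by
  classical
  rw [leadExp, support_monomial, if_neg hc, Finset.sup_singleton, AddEquiv.symm_apply_apply]

/-- If some variable of the monomial `e` lies in `t`, then `monomial e c` lies in the ideal
generated by the `X i`, `i ∈ t`. -/
lemma monomial_mem_span {t : Set (Fin N)} {e : Fin N →₀ ℕ} (c : k) {i : Fin N}
    (hi : i ∈ e.support) (hit : i ∈ t) :
    monomial e c ∈ Ideal.span ((fun j => (X j : MvPolynomial (Fin N) k)) '' t) := by
  have h1 : Finsupp.single i 1 ≤ e :=
    Finsupp.single_le_iff.mpr (Nat.one_le_iff_ne_zero.mpr (Finsupp.mem_support_iff.mp hi))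
  have h2 : (monomial e c : MvPolynomial (Fin N) k)
      = monomial (e - Finsupp.single i 1) c * X i := by
    rw [X, monomial_mul, mul_one, tsub_add_cancel_of_le h1]
  rw [h2]
  exact Ideal.mul_mem_left _ _ (Ideal.subset_span ⟨i, hit, rfl⟩)

open scoped Classical in
/-- The part of `f` consisting of monomials all of whose variables lie in `s`. -/
noncomputable def keep (s : Set (Fin N)) (f : MvPolynomial (Fin N) k) :
    MvPolynomial (Fin N) k :=
  ∑ e ∈ f.support.filter (fun e => ∀ i ∈ e.support, i ∈ s), monomial e (coeff e f)

lemma coeff_keep_of {s : Set (Fin N)} (f : MvPolynomial (Fin N) k) {e : Fin N →₀ ℕ}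
    (h : ∀ i ∈ e.support, i ∈ s) : coeff e (keep s f) = coeff e f := by
  classical
  rw [keep]
  rw [MvPolynomial.coeff_sum]
  simp only [MvPolynomial.coeff_monomial]
  rw [Finset.sum_ite_eq' _ e (fun e' => coeff e' f)]
  simp only [Finset.mem_filter]
  split_ifs with h1
  · rfl
  · exact (MvPolynomial.notMem_support_iff.mp (fun hc => h1 ⟨hc, h⟩)).symm

lemma coeff_keep_not {s : Set (Fin N)} (f : MvPolynomial (Fin N) k) {e : Fin N →₀ ℕ}
    (h : ¬ ∀ i ∈ e.support, i ∈ s) : coeff e (keep s f) = 0 := by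
  classical
  rw [keep]
  rw [MvPolynomial.coeff_sum]
  simp only [MvPolynomial.coeff_monomial]
  rw [Finset.sum_ite_eq' _ e (fun e' => coeff e' f)]
  simp only [Finset.mem_filter]
  rw [if_neg (fun hc => h hc.2)]

lemma keep_prop {s : Set (Fin N)} {f : MvPolynomial (Fin N) k} {e : Fin N →₀ ℕ}
    (he : e ∈ (keep s f).support) : ∀ i ∈ e.support, i ∈ s := by
  rw [MvPolynomial.mem_support_iff] at he
  by_contra hc
  exact he (coeff_keep_not f hc)

lemma support_keep_subset (s : Set (Fin N)) (f : MvPolynomial (Fin N) k) :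
    (keep s f).support ⊆ f.support := by
  intro e he
  have hP := keep_prop he
  rw [MvPolynomial.mem_support_iff] at he ⊢
  rwa [coeff_keep_of f hP] at he

lemma vars_keep (s : Set (Fin N)) (f : MvPolynomial (Fin N) k) :
    ↑(keep s f).vars ⊆ s := by
  intro i hi
  obtain ⟨e, he, hie⟩ := (MvPolynomial.mem_vars i).mp hi
  exact keep_prop he i hie

lemma sub_keep_mem (s : Set (Fin N)) (f : MvPolynomial (Fin N) k) :
    f - keep s f ∈ Ideal.span ((fun j => (X j : MvPolynomial (Fin N) k)) '' {i | i ∉ s}) := by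
  classical
  have hf : f = keep s f
      + ∑ e ∈ f.support.filter (fun e => ¬ ∀ i ∈ e.support, i ∈ s), monomial e (coeff e f) := by
    rw [keep, Finset.sum_filter_add_sum_filter_not, support_sum_monomial_coeff]
  rw [sub_eq_of_eq_add' hf]
  apply Ideal.sum_mem
  intro e he
  rw [Finset.mem_filter] at he
  push_neg at he
  obtain ⟨i, hie, his⟩ := he.2
  exact monomial_mem_span _ hie his

/-- The coefficient of any pure power of `x_{l₀}` in any element of `I` vanishes,
when `I` is stable under homogeneous components and vanishes at the coordinate point `l₀`. -/
lemma coeff_single_eq_zero (l0 : Fin N) (I : Ideal (MvPolynomial (Fin N) k))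
    (hIhom : ∀ f ∈ I, ∀ d : ℕ, homogeneousComponent d f ∈ I)
    (hp : ∀ f ∈ I, eval (coordPt k (l0 : ℕ)) f = 0)
    {f : MvPolynomial (Fin N) k} (hf : f ∈ I) (d : ℕ) :
    coeff (Finsupp.single l0 d) f = 0 := by
  have hcoe : ∀ j : Fin N, (j : ℕ) = (l0 : ℕ) ↔ j = l0 := fun j => Fin.val_eq_val j l0
  set g := homogeneousComponent d f with hg
  have hev : eval (coordPt k (l0 : ℕ)) g = 0 := hp _ (hIhom f hf d)
  have hgd : ∀ e ∈ g.support, e.degree = d := by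
    intro e he
    rw [MvPolynomial.mem_support_iff, hg, coeff_homogeneousComponent] at he
    by_contra hc
    rw [if_neg hc] at he
    exact he rfl
  have key : eval (coordPt k (l0 : ℕ)) g = coeff (Finsupp.single l0 d) g := by
    rw [eval_eq]
    rw [Finset.sum_eq_single (Finsupp.single l0 d)]
    · by_cases hmem : Finsupp.single l0 d ∈ g.support
      · rw [Finset.prod_eq_one, mul_one]
        intro i hi
        have : i = l0 := Finset.mem_singleton.mp (Finsupp.support_single_subset hi)
        rw [this, coordPt, if_pos rfl, one_pow]
      · rw [MvPolynomial.notMem_support_iff.mp hmem, zero_mul]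
    · intro e he hne
      by_cases hs : e.support ⊆ {l0}
      · exfalso
        have heq : e = Finsupp.single l0 (e l0) := Finsupp.support_subset_singleton.mp hs
        have : e.degree = d := hgd e he
        rw [heq, Aux.degree_single] at this
        exact hne (by rw [heq, this])
      · obtain ⟨i, hie, hil⟩ := Finset.not_subset.mp hs
        rw [Finset.prod_eq_zero hie, mul_zero]
        rw [coordPt]
        rw [if_neg (fun hc => hil (Finset.mem_singleton.mpr ((hcoe i).mp hc)))]
        exact zero_pow (Finsupp.mem_support_iff.mp hie)
    · intro hmem
      rw [MvPolynomial.notMem_support_iff.mp hmem, zero_mul]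
  have : coeff (Finsupp.single l0 d) g = coeff (Finsupp.single l0 d) f := by
    rw [hg, coeff_homogeneousComponent, if_pos (Aux.degree_single l0 d)]
  rw [← this, ← key, hev]

/-- Key lemma: an element of `I` whose variables lie in `t` lies in the ideal generated by
the `X i` for `i ∈ t \ {l₀}`. -/
lemma mem_span_diff_single (l0 : Fin N) (I : Ideal (MvPolynomial (Fin N) k))
    (hIhom : ∀ f ∈ I, ∀ d : ℕ, homogeneousComponent d f ∈ I)
    (hp : ∀ f ∈ I, eval (coordPt k (l0 : ℕ)) f = 0)
    {f : MvPolynomial (Fin N) k} (hf : f ∈ I) (t : Set (Fin N)) (hvars : ↑f.vars ⊆ t) :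
    f ∈ Ideal.span ((fun j => (X j : MvPolynomial (Fin N) k)) '' (t \ {l0})) := by
  have hrepr : (∑ e ∈ f.support, monomial e (coeff e f)) ∈
      Ideal.span ((fun j => (X j : MvPolynomial (Fin N) k)) '' (t \ {l0})) := by
    apply Ideal.sum_mem
    intro e he
    by_cases hs : e.support ⊆ {l0}
    · exfalso
      have heq : e = Finsupp.single l0 (e l0) := Finsupp.support_subset_singleton.mp hs
      have : coeff e f = 0 := by
        rw [heq]; exact coeff_single_eq_zero l0 I hIhom hp hf (e l0)
      exact MvPolynomial.mem_support_iff.mp he this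
    · obtain ⟨i, hie, hil⟩ := Finset.not_subset.mp hs
      refine monomial_mem_span _ hie ⟨hvars ?_, fun hc => hil (Finset.mem_singleton.mpr hc)⟩
      exact (MvPolynomial.mem_vars i).mpr ⟨e, he, hie⟩
  rwa [support_sum_monomial_coeff] at hrepr

/-- Main step of the inclusion `⊆`: if the leading exponent of `f ∈ J` only involves variables
of `s`, and all `X i`, `i ∉ s`, lie in `J`, then the leading monomial lies in
`restInitialIdeal mo J s`. -/
lemma keep_case (mo : MonomialOrder (Fin N)) (J : Ideal (MvPolynomial (Fin N) k))
    (s : Set (Fin N)) (hcompl : ∀ i : Fin N, i ∉ s → (X i : MvPolynomial (Fin N) k) ∈ J)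
    {f : MvPolynomial (Fin N) k} (hfJ : f ∈ J) (hf0 : f ≠ 0)
    (hsup : ∀ i ∈ (leadExp mo f).support, i ∈ s) :
    monomial (leadExp mo f) (1 : k) ∈ restInitialIdeal mo J s := by
  set g := keep s f with hgdef
  have hspan : Ideal.span ((fun j => (X j : MvPolynomial (Fin N) k)) '' {i | i ∉ s}) ≤ J := by
    rw [Ideal.span_le]
    rintro _ ⟨i, hi, rfl⟩
    exact hcompl i hi
  have hgJ : g ∈ J := by
    have : f - g ∈ J := hspan (sub_keep_mem s f)
    have h2 : g = f - (f - g) := by ring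
    rw [h2]; exact Ideal.sub_mem J hfJ this
  have hmem : leadExp mo f ∈ g.support := by
    rw [MvPolynomial.mem_support_iff, hgdef, coeff_keep_of f hsup]
    exact MvPolynomial.mem_support_iff.mp (leadExp_mem_support mo hf0)
  have hg0 : g ≠ 0 := fun hc => by simp [hc] at hmem
  have hle : leadExp mo g = leadExp mo f := leadExp_eq_of mo (support_keep_subset s f) hmem
  exact Ideal.subset_span ⟨g, hgJ, hg0, vars_keep s f, by rw [hle]⟩

end Aux

/-- Lemma on initial ideals of a union of two varieties in complementary
coordinate blocks. If `Y ⊆ {x_0 = ⋯ = x_{l-1} = 0}` and `Z ⊆ {x_{l+1} = ⋯ = x_n = 0}` are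
defined by homogeneous ideals `I_Y`, `I_Z`, meeting at the coordinate point `p` with only
`x_l ≠ 0` (which lies on both), then for any monomial order `≺`,
`in_≺(I_Y ∩ I_Z) = ⟨in_≺(I_Y ∩ k[x_l,…,x_n])⟩ + ⟨in_≺(I_Z ∩ k[x_0,…,x_l])⟩ + T`,
where `T = ⟨x_0,…,x_{l-1}⟩·⟨x_{l+1},…,x_n⟩`. -/
theorem initial_ideal_decomposition {k : Type*} [Field k] (n l : ℕ) (hl : l ≤ n)
    (IY IZ : Ideal (MvPolynomial (Fin (n + 1)) k))
    (hIYhom : ∀ f ∈ IY, ∀ d : ℕ, homogeneousComponent d f ∈ IY)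
    (hIZhom : ∀ f ∈ IZ, ∀ d : ℕ, homogeneousComponent d f ∈ IZ)
    (hYsub : ∀ j : Fin (n + 1), (j : ℕ) < l → (X j : MvPolynomial (Fin (n + 1)) k) ∈ IY)
    (hZsub : ∀ j : Fin (n + 1), l < (j : ℕ) → (X j : MvPolynomial (Fin (n + 1)) k) ∈ IZ)
    (hYp : ∀ f ∈ IY, eval (coordPt k l) f = 0)
    (hZp : ∀ f ∈ IZ, eval (coordPt k l) f = 0)
    (mo : MonomialOrder (Fin (n + 1))) :
    initialIdeal mo (IY ⊓ IZ) =
      restInitialIdeal mo IY {j : Fin (n + 1) | l ≤ (j : ℕ)} +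
      restInitialIdeal mo IZ {j : Fin (n + 1) | (j : ℕ) ≤ l} +
      Ideal.span ((fun j => (X j : MvPolynomial (Fin (n + 1)) k)) ''
          {j : Fin (n + 1) | (j : ℕ) < l}) *
        Ideal.span ((fun j => (X j : MvPolynomial (Fin (n + 1)) k)) ''
          {j : Fin (n + 1) | l < (j : ℕ)}) := by
  set l0 : Fin (n + 1) := ⟨l, by omega⟩ with hl0
  have hl0v : (l0 : ℕ) = l := rfl
  set A := restInitialIdeal mo IY {j : Fin (n + 1) | l ≤ (j : ℕ)} with hA
  set B := restInitialIdeal mo IZ {j : Fin (n + 1) | (j : ℕ) ≤ l} with hB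
  set C := Ideal.span ((fun j => (X j : MvPolynomial (Fin (n + 1)) k)) ''
      {j : Fin (n + 1) | (j : ℕ) < l}) *
    Ideal.span ((fun j => (X j : MvPolynomial (Fin (n + 1)) k)) ''
      {j : Fin (n + 1) | l < (j : ℕ)}) with hC
  apply le_antisymm
  · -- ⊆ direction
    rw [initialIdeal, restInitialIdeal, Ideal.span_le]
    rintro _ ⟨f, hfI, hf0, -, rfl⟩
    set e := leadExp mo f with he
    by_cases h1 : ∃ i ∈ e.support, (i : ℕ) < l
    · by_cases h2 : ∃ j ∈ e.support, l < (j : ℕ)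
      · -- lands in C
        obtain ⟨i, hie, hil⟩ := h1
        obtain ⟨j, hje, hjl⟩ := h2
        have hij : i ≠ j := fun hc => by rw [hc] at hil; omega
        have hle : Finsupp.single i 1 + Finsupp.single j 1 ≤ e := by
          rw [Finsupp.le_def]
          intro a
          rw [Finsupp.add_apply, Finsupp.single_apply, Finsupp.single_apply]
          have hi1 : 1 ≤ e i := Nat.one_le_iff_ne_zero.mpr (Finsupp.mem_support_iff.mp hie)
          have hj1 : 1 ≤ e j := Nat.one_le_iff_ne_zero.mpr (Finsupp.mem_support_iff.mp hje)
          by_cases hia : i = a <;> by_cases hja : j = a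
          · exact absurd (hia.trans hja.symm) hij
          · subst hia; simpa [hja] using hi1
          · subst hja; simpa [hia] using hj1
          · simp [hia, hja]
        have heq : (monomial e (1 : k) : MvPolynomial (Fin (n + 1)) k)
            = X i * X j * monomial (e - (Finsupp.single i 1 + Finsupp.single j 1)) 1 := by
          rw [X, X, monomial_mul, monomial_mul, mul_one, mul_one,
            add_tsub_cancel_of_le hle]
        rw [heq]
        have hXiXj : (X i : MvPolynomial (Fin (n + 1)) k) * X j ∈ C := by
          rw [hC]
          exact Ideal.mul_mem_mul (Ideal.subset_span ⟨i, hil, rfl⟩)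
            (Ideal.subset_span ⟨j, hjl, rfl⟩)
        have : (X i : MvPolynomial (Fin (n + 1)) k) * X j
            * monomial (e - (Finsupp.single i 1 + Finsupp.single j 1)) 1 ∈ C :=
          Ideal.mul_mem_right _ _ hXiXj
        exact Submodule.mem_sup_right this
      · -- lands in B
        push_neg at h2
        have : monomial e (1 : k) ∈ B := by
          rw [hB, he]
          apply keep_case mo IZ _ _ hfI.2 hf0
          · intro i hi
            exact h2 i hi
          · intro i his
            simp only [Set.mem_setOf_eq, not_le] at his
            exact hZsub i his
        exact Submodule.mem_sup_left (Submodule.mem_sup_right this)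
    · -- lands in A
      push_neg at h1
      have : monomial e (1 : k) ∈ A := by
        rw [hA, he]
        apply keep_case mo IY _ _ hfI.1 hf0
        · intro i hi
          simpa using h1 i hi
        · intro i his
          simp only [Set.mem_setOf_eq, not_le] at his
          exact hYsub i his
      exact Submodule.mem_sup_left (Submodule.mem_sup_left this)
  · -- ⊇ direction
    have hsetY : {j : Fin (n + 1) | l ≤ (j : ℕ)} \ {l0} = {j : Fin (n + 1) | l < (j : ℕ)} := by
      ext j
      simp only [Set.mem_diff, Set.mem_setOf_eq, Set.mem_singleton_iff]
      constructor
      · rintro ⟨h1, h2⟩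
        rcases lt_or_eq_of_le h1 with h | h
        · exact h
        · exact absurd (Fin.ext h.symm) h2
      · intro h
        exact ⟨le_of_lt h, fun hc => by rw [hc] at h; omega⟩
    have hsetZ : {j : Fin (n + 1) | (j : ℕ) ≤ l} \ {l0} = {j : Fin (n + 1) | (j : ℕ) < l} := by
      ext j
      simp only [Set.mem_diff, Set.mem_setOf_eq, Set.mem_singleton_iff]
      constructor
      · rintro ⟨h1, h2⟩
        rcases lt_or_eq_of_le h1 with h | h
        · exact h
        · exact absurd (Fin.ext h) h2
      · intro h
        exact ⟨le_of_lt h, fun hc => by rw [hc] at h; omega⟩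
    have hA_le : A ≤ initialIdeal mo (IY ⊓ IZ) := by
      rw [hA, restInitialIdeal, Ideal.span_le]
      rintro _ ⟨f, hfY, hf0, hvars, rfl⟩
      have hfZ : f ∈ IZ := by
        have := mem_span_diff_single l0 IY hIYhom (by rw [hl0v]; exact hYp) hfY _ hvars
        rw [hsetY] at this
        refine Ideal.span_le.mpr ?_ this
        rintro _ ⟨j, hj, rfl⟩
        exact hZsub j hj
      rw [initialIdeal, restInitialIdeal]
      exact Ideal.subset_span ⟨f, ⟨hfY, hfZ⟩, hf0, by simp, rfl⟩
    have hB_le : B ≤ initialIdeal mo (IY ⊓ IZ) := by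
      rw [hB, restInitialIdeal, Ideal.span_le]
      rintro _ ⟨f, hfZ, hf0, hvars, rfl⟩
      have hfY : f ∈ IY := by
        have := mem_span_diff_single l0 IZ hIZhom (by rw [hl0v]; exact hZp) hfZ _ hvars
        rw [hsetZ] at this
        refine Ideal.span_le.mpr ?_ this
        rintro _ ⟨j, hj, rfl⟩
        exact hYsub j hj
      rw [initialIdeal, restInitialIdeal]
      exact Ideal.subset_span ⟨f, ⟨hfY, hfZ⟩, hf0, by simp, rfl⟩
    have hC_le : C ≤ initialIdeal mo (IY ⊓ IZ) := by
      rw [hC, Ideal.span_mul_span', Ideal.span_le]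
      rintro _ ⟨_, ⟨i, hi, rfl⟩, _, ⟨j, hj, rfl⟩, rfl⟩
      have hmemY : (X i : MvPolynomial (Fin (n + 1)) k) * X j ∈ IY :=
        Ideal.mul_mem_right _ _ (hYsub i hi)
      have hmemZ : (X i : MvPolynomial (Fin (n + 1)) k) * X j ∈ IZ :=
        Ideal.mul_mem_left _ _ (hZsub j hj)
      have hne : (X i : MvPolynomial (Fin (n + 1)) k) * X j ≠ 0 :=
        mul_ne_zero (X_ne_zero i) (X_ne_zero j)
      have heq : (X i : MvPolynomial (Fin (n + 1)) k) * X j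
          = monomial (Finsupp.single i 1 + Finsupp.single j 1) 1 := by
        rw [X, X, monomial_mul, mul_one]
      have hlead : monomial (leadExp mo ((X i : MvPolynomial (Fin (n + 1)) k) * X j)) (1 : k)
          = X i * X j := by
        rw [heq, leadExp_monomial mo _ (one_ne_zero)]
      show (X i : MvPolynomial (Fin (n + 1)) k) * X j ∈ initialIdeal mo (IY ⊓ IZ)
      rw [initialIdeal, restInitialIdeal]
      exact Ideal.subset_span ⟨X i * X j, ⟨hmemY, hmemZ⟩, hne, by simp, hlead.symm⟩
    rw [Ideal.add_eq_sup, Ideal.add_eq_sup]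
    exact sup_le (sup_le hA_le hB_le) hC_le
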